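/- Let δ > 0, ξ ∈ ℝ², and let φ ∈ N′ be such that φ ∩ Q^M_{3δ}(ξ) = ∅. Let D = {x₁, x₂, x₃, x₄} ⊂ ℝ² × M be a (ξ,δ)-cycle with D ∈ N′ and D ∪ φ ∈ N′. Then h_c(D ∪ φ, x_i) = h_c(D, x_i) for all i ∈ {1, 2, 3, 4}. -/

import Mathlib

noncomputable section

namespace Lilypond

open scoped ENNReal

/-- Marked points: a spatial position in `ℝ² = ℝ × ℝ` (with the supremum norm)
together with a mark, which is a direction vector in `ℝ²`. -/
abbrev Pt : Type := (ℝ × ℝ) × (ℝ × ℝ)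

def e1 : ℝ × ℝ := (1, 0)
def e2 : ℝ × ℝ := (0, 1)

/-- The mark space `M = {e₁, −e₁, e₂, −e₂}`. -/
def Mset : Set (ℝ × ℝ) := {e1, -e1, e2, -e2}

/-- The Euclidean norm on `ℝ²` (the norm of `ℝ × ℝ` itself is the sup-norm `|·|_∞`). -/
def eNorm (p : ℝ × ℝ) : ℝ := Real.sqrt (p.1 ^ 2 + p.2 ^ 2)

/-- The eight forbidden directions `{±e₁, ±e₂, (±e₁ ± e₂)/√2}`. -/
def badDirs : Set (ℝ × ℝ) :=
  {e1, -e1, e2, -e2, (Real.sqrt 2)⁻¹ • (e1 + e2), (Real.sqrt 2)⁻¹ • (e1 - e2),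
    (Real.sqrt 2)⁻¹ • (-e1 + e2), (Real.sqrt 2)⁻¹ • (-e1 - e2)}

/-- The set of spatial positions of a marked configuration. -/
def pos (φ : Set Pt) : Set (ℝ × ℝ) := Prod.fst '' φ

/-- `A` contains an (infinite) anisotropic descending chain: there are `b > 0` and pairwise
distinct points `ξ₀, ξ₁, ξ₂, …` of `A` with `|ξ₀ − ξ₁|_∞ ≤ b` and
`|ξ_{i+1} − ξ_i|_∞ < |ξ_i − ξ_{i−1}|_∞` for all `i ≥ 1`. -/
def HasInfDescChain (A : Set (ℝ × ℝ)) : Prop :=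
  ∃ b > (0 : ℝ), ∃ ξ : ℕ → ℝ × ℝ, Function.Injective ξ ∧ (∀ i, ξ i ∈ A) ∧
    ‖ξ 0 - ξ 1‖ ≤ b ∧ ∀ i, 1 ≤ i → ‖ξ (i + 1) - ξ i‖ < ‖ξ i - ξ (i - 1)‖

/-- Local finiteness of a marked configuration. -/
def LocFin (φ : Set Pt) : Prop := ∀ r : ℝ, {x ∈ φ | ‖x.1‖ ≤ r}.Finite

/-- A marked set `φ ⊂ ℝ² × M` is admissible: it is locally finite, all marks lie in `M`,
its set of spatial positions contains no anisotropic descending chain, and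
`(ξ − η)/|ξ − η| ∉ {±e₁, ±e₂, (±e₁ ± e₂)/√2}` (Euclidean normalization) for all distinct
`x = (ξ,v), y = (η,w) ∈ φ`. -/
def Admissible (φ : Set Pt) : Prop :=
  LocFin φ ∧ (∀ x ∈ φ, x.2 ∈ Mset) ∧ ¬ HasInfDescChain (pos φ) ∧
    ∀ x ∈ φ, ∀ y ∈ φ, x ≠ y → (eNorm (x.1 - y.1))⁻¹ • (x.1 - y.1) ∉ badDirs

/-- The half-open growth segment `[ξ, ξ + l·v)`, interpreted as the full ray
`ξ + [0,∞)·v` when `l = ∞`. -/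
def seg (ξ v : ℝ × ℝ) (l : ℝ≥0∞) : Set (ℝ × ℝ) :=
  {p | ∃ t : ℝ, 0 ≤ t ∧ ENNReal.ofReal t < l ∧ p = ξ + t • v}

/-- The tip `ξ + f(x)·v` of the (finite) segment grown from `x = (ξ, v)`. -/
def tip (f : Pt → ℝ≥0∞) (x : Pt) : ℝ × ℝ := x.1 + (f x).toReal • x.2

/-- `y = (η, w)` is a stopping neighbor of `x = (ξ, v)` in `φ` (w.r.t. the growth
function `f`): `y ∈ φ`, `ξ + f(x)v ∈ [η, η + f(y)w)` and `|ξ + f(x)v − η| < f(x)`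
(Euclidean norm). -/
def IsStopNbr (φ : Set Pt) (f : Pt → ℝ≥0∞) (x y : Pt) : Prop :=
  y ∈ φ ∧ tip f x ∈ seg y.1 y.2 (f y) ∧ eNorm (tip f x - y.1) < (f x).toReal

/-- `f` is a growth function for `φ`: the half-open segments `[ξ, ξ + f(x)v)` are pairwise
disjoint (hard-core property), every `x ∈ φ` with `f(x) < ∞` has a unique stopping
neighbor, and (as a normalization identifying `f` with a function on `φ`) `f` vanishes
off `φ`. -/
def IsGrowthFn (φ : Set Pt) (f : Pt → ℝ≥0∞) : Prop :=
  (∀ x ∈ φ, ∀ y ∈ φ, x ≠ y → seg x.1 x.2 (f x) ∩ seg y.1 y.2 (f y) = ∅) ∧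
  (∀ x ∈ φ, f x ≠ ⊤ → ∃! y, IsStopNbr φ f x y) ∧
  (∀ x, x ∉ φ → f x = 0)

open Classical in
/-- The growth function `f_φ` of a configuration (chosen by choice; it is unique on
admissible configurations). -/
def growthFn (φ : Set Pt) : Pt → ℝ≥0∞ :=
  if h : ∃ f, IsGrowthFn φ f then h.choose else fun _ => 0

/-- `N′`: nonempty admissible configurations possessing a growth function which is
finite everywhere on the configuration. -/
def Nprime (φ : Set Pt) : Prop :=
  φ.Nonempty ∧ Admissible φ ∧ (∃ f, IsGrowthFn φ f) ∧ ∀ x ∈ φ, growthFn φ x ≠ ⊤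

open Classical in
/-- The combinatorial descendant `h_c(φ, x)`: the (unique) stopping neighbor of `x`
in `φ`. -/
def hc (φ : Set Pt) (x : Pt) : Pt :=
  if h : ∃ y, IsStopNbr φ (growthFn φ) x y then h.choose else x

/-- The geometric descendant `h_g(φ, x) = ξ + f_φ(x)·v`. -/
def hg (φ : Set Pt) (x : Pt) : ℝ × ℝ := tip (growthFn φ) x

/-- The closed segment `I(φ, x) = [ξ, h_g(φ, x)]`. -/
def I (φ : Set Pt) (x : Pt) : Set (ℝ × ℝ) := segment ℝ x.1 (hg φ x)


/-- The square `Q_δ(ξ) = ξ + [−δ/2, δ/2]²` (a closed sup-norm ball). -/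
def Qb (δ : ℝ) (ξ : ℝ × ℝ) : Set (ℝ × ℝ) := {p | ‖p - ξ‖ ≤ δ / 2}

/-- The marked square `Q^M_δ(ξ) = Q_δ(ξ) × M`. -/
def QbM (δ : ℝ) (ξ : ℝ × ℝ) : Set Pt := {x | ‖x.1 - ξ‖ ≤ δ / 2}

/-- Rotation by `π/2`. -/
def rot (v : ℝ × ℝ) : ℝ × ℝ := (-v.2, v.1)

/-- The Euclidean inner product on `ℝ²`. -/
def dot (p q : ℝ × ℝ) : ℝ := p.1 * q.1 + p.2 * q.2

/-- `x : Fin 4 → Pt` (with pairwise distinct values) forms a `(ξ, δ)`-cycle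
`D = {x₀, …, x₃} ⊂ Q^M_δ(ξ)`: consecutive marks are rotations by `π/2` of each other,
all geometric descendants within `D` lie in `Q_δ(ξ)`, `h_g(D, x_j) ∈ I(D, x_{j+1})`
cyclically, and `min(⟨ξ − ξ_j, v_j⟩, ⟨ξ − ξ_j, v_{j+1}⟩) > 0` for all `j`. -/
def IsCycle (ξ : ℝ × ℝ) (δ : ℝ) (x : Fin 4 → Pt) : Prop :=
  Function.Injective x ∧
  (∀ j, x j ∈ QbM δ ξ) ∧
  (∀ j : Fin 4, (x j).2 = rot ((x (j + 1)).2)) ∧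
  (∀ j, hg (Set.range x) (x j) ∈ Qb δ ξ) ∧
  (∀ j : Fin 4, hg (Set.range x) (x j) ∈ I (Set.range x) (x (j + 1))) ∧
  (∀ j : Fin 4, 0 < dot (ξ - (x j).1) ((x j).2) ∧ 0 < dot (ξ - (x j).1) ((x (j + 1)).2))

/-! Inside `D` the four growth segments close up: the tip of `x j` lands strictly inside the
segment of `x (j+1)`, which is therefore its stopping neighbour. This survives the addition of
`φ`. In `D ∪ φ` the segment of `x j` cannot be longer than in `D`, for its tip would cross the
(not shorter) segment of `x (j+1)`. Nor can it be shorter: its tip would still lie in `Q_δ(ξ)`,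
so its stopping neighbour, at distance less than `δ`, lies in `Q_{3δ}(ξ)` and hence in `D`;
but the parallel cycle points are excluded by the forbidden directions, and the perpendicular
ones cross the line of `x j` only at the tip of `x j` in `D` or too far from their own start. -/

lemma Fin4.eq_or_eq_or_eq_or_eq (j k : Fin 4) : k = j ∨ k = j + 1 ∨ k = j + 2 ∨ k = j + 3 := by
  revert j k; decide

lemma Fin4.add_one_add_one (j : Fin 4) : j + 1 + 1 = j + 2 := by
  revert j; decide

lemma Fin4.add_three_add_one (j : Fin 4) : j + 3 + 1 = j := by
  revert j; decide

section Marks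

variable {v : ℝ × ℝ}

lemma mem_Mset_iff : v ∈ Mset ↔ v = e1 ∨ v = -e1 ∨ v = e2 ∨ v = -e2 := Iff.rfl

lemma ne_zero_of_mem_Mset (hv : v ∈ Mset) : v ≠ 0 := by
  rcases mem_Mset_iff.1 hv with rfl | rfl | rfl | rfl <;> simp [e1, e2, Prod.ext_iff]

lemma neg_mem_Mset (hv : v ∈ Mset) : -v ∈ Mset := by
  rcases mem_Mset_iff.1 hv with rfl | rfl | rfl | rfl <;> simp [Mset]

lemma rot_mem_Mset (hv : v ∈ Mset) : rot v ∈ Mset := by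
  rcases mem_Mset_iff.1 hv with rfl | rfl | rfl | rfl <;> simp [rot, Mset, e1, e2, Prod.ext_iff]

lemma mem_badDirs_of_mem_Mset (hv : v ∈ Mset) : v ∈ badDirs := by
  rcases mem_Mset_iff.1 hv with rfl | rfl | rfl | rfl <;> simp [badDirs]

lemma eNorm_smul_of_mem_Mset (hv : v ∈ Mset) (c : ℝ) : eNorm (c • v) = |c| := by
  rcases mem_Mset_iff.1 hv with rfl | rfl | rfl | rfl <;>
    simp [eNorm, e1, e2, Real.sqrt_sq_eq_abs]

lemma norm_smul_of_mem_Mset (hv : v ∈ Mset) (c : ℝ) : ‖c • v‖ = |c| := by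
  rcases mem_Mset_iff.1 hv with rfl | rfl | rfl | rfl <;> simp [Prod.norm_def, e1, e2]

lemma norm_le_eNorm (p : ℝ × ℝ) : ‖p‖ ≤ eNorm p := by
  rw [Prod.norm_def, Real.norm_eq_abs, Real.norm_eq_abs, eNorm]
  refine max_le ?_ ?_ <;> rw [← Real.sqrt_sq_eq_abs] <;> gcongr <;> nlinarith

lemma rot_rot (v : ℝ × ℝ) : rot (rot v) = -v := by
  simp [rot, Prod.ext_iff]

lemma eq_zero_of_smul_rot_eq_smul (hv : v ≠ 0) {s t : ℝ} (h : s • rot v = t • v) :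
    s = 0 ∧ t = 0 := by
  have h1 : -(s * v.2) = t * v.1 := by simpa [rot] using congrArg Prod.fst h
  have h2 : s * v.1 = t * v.2 := by simpa [rot] using congrArg Prod.snd h
  have hs : s = 0 := by
    have hpos : 0 < v.1 ^ 2 + v.2 ^ 2 := by
      rcases v with ⟨v₁, v₂⟩
      have : ¬(v₁ = 0 ∧ v₂ = 0) := by simpa [Prod.ext_iff] using hv
      rcases not_and_or.1 this with h | h <;> positivity
    have : s * (v.1 ^ 2 + v.2 ^ 2) = 0 := by linear_combination v.1 * h2 - v.2 * h1
    exact (mul_eq_zero.1 this).resolve_right hpos.ne'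
  subst hs
  exact ⟨rfl, (smul_eq_zero.1 (by simpa using h.symm)).resolve_right hv⟩

lemma eq_of_add_smul_rot_eq (hv : v ≠ 0) {ξ η : ℝ × ℝ} {s t s' t' : ℝ}
    (h : ξ + s • rot v = η + t • v) (h' : ξ + s' • rot v = η + t' • v) : s = s' ∧ t = t' := by
  have := eq_zero_of_smul_rot_eq_smul hv (s := s - s') (t := t - t')
    (by linear_combination (norm := module) h - h')
  exact ⟨sub_eq_zero.1 this.1, sub_eq_zero.1 this.2⟩

lemma mark_add_two {x : Fin 4 → Pt} (hrot : ∀ j, (x j).2 = rot (x (j + 1)).2) (j : Fin 4) :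
    (x (j + 2)).2 = -(x j).2 := by
  rw [hrot j, hrot (j + 1), Fin4.add_one_add_one, rot_rot, neg_neg]

lemma mark_add_three {x : Fin 4 → Pt} (hrot : ∀ j, (x j).2 = rot (x (j + 1)).2) (j : Fin 4) :
    (x (j + 3)).2 = rot (x j).2 := by
  rw [hrot (j + 3), Fin4.add_three_add_one]

end Marks

lemma Admissible.sub_ne_smul {φ : Set Pt} (hA : Admissible φ) {x y : Pt} (hx : x ∈ φ)
    (hy : y ∈ φ) {v : ℝ × ℝ} (hv : v ∈ Mset) {c : ℝ} (hc : c ≠ 0) : y.1 - x.1 ≠ c • v := by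
  intro h
  by_cases hxy : y = x
  · subst hxy
    exact smul_ne_zero hc (ne_zero_of_mem_Mset hv) (by rw [← h, sub_self])
  apply hA.2.2.2 y hy x hx hxy
  rw [h, eNorm_smul_of_mem_Mset hv, smul_smul]
  rcases hc.lt_or_gt with hc | hc
  · rw [abs_of_neg hc, inv_neg, neg_mul, inv_mul_cancel₀ hc.ne, neg_one_smul]
    exact mem_badDirs_of_mem_Mset (neg_mem_Mset hv)
  · rw [abs_of_pos hc, inv_mul_cancel₀ hc.ne', one_smul]
    exact mem_badDirs_of_mem_Mset hv

lemma add_smul_mem_seg {ξ v : ℝ × ℝ} {l : ℝ≥0∞} {t : ℝ} (ht : 0 ≤ t) (hl : l ≠ ⊤)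
    (htl : t < l.toReal) : ξ + t • v ∈ seg ξ v l :=
  ⟨t, ht, (ENNReal.ofReal_lt_iff_lt_toReal ht hl).2 htl, rfl⟩

section GrowthFn

variable {φ : Set Pt} {f : Pt → ℝ≥0∞} {x y : Pt}

lemma growthFn_isGrowthFn (h : ∃ f, IsGrowthFn φ f) : IsGrowthFn φ (growthFn φ) := by
  rw [growthFn, dif_pos h]
  exact h.choose_spec

lemma IsStopNbr.norm_sub_lt (h : IsStopNbr φ f x y) : ‖y.1 - tip f x‖ < (f x).toReal :=
  calc ‖y.1 - tip f x‖ = ‖tip f x - y.1‖ := norm_sub_rev _ _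
    _ ≤ eNorm (tip f x - y.1) := norm_le_eNorm _
    _ < (f x).toReal := h.2.2

lemma IsStopNbr.toReal_pos (h : IsStopNbr φ f x y) : 0 < (f x).toReal :=
  (norm_nonneg _).trans_lt h.norm_sub_lt

lemma IsStopNbr.mark_ne (hA : Admissible φ) (hx : x ∈ φ) (h : IsStopNbr φ f x y) :
    y.2 ≠ x.2 ∧ y.2 ≠ -x.2 := by
  obtain ⟨hy, ⟨t, ht, -, htip⟩, hdist⟩ := h
  have hv := hA.2.1 x hx
  set s := (f x).toReal
  rw [htip, add_sub_cancel_left, eNorm_smul_of_mem_Mset (hA.2.1 y hy), abs_of_nonneg ht]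
    at hdist
  have htip' : x.1 + s • x.2 = y.1 + t • y.2 := htip
  constructor <;> intro hw <;> rw [hw] at htip'
  · exact hA.sub_ne_smul hx hy hv (c := s - t) (by linarith)
      (by linear_combination (norm := module) -htip')
  · exact hA.sub_ne_smul hx hy hv (c := s + t) (by linarith)
      (by linear_combination (norm := module) -htip')

lemma IsGrowthFn.isStopNbr_of_tip_mem (hf : IsGrowthFn φ f) (hx : x ∈ φ) (hfin : f x ≠ ⊤)
    (hy : y ∈ φ) (htip : tip f x ∈ seg y.1 y.2 (f y)) : IsStopNbr φ f x y := by
  obtain ⟨z, hz, -⟩ := hf.2.1 x hx hfin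
  obtain rfl : z = y := by
    by_contra hzy
    exact (hf.1 z hz.1 y hy hzy).subset ⟨hz.2.1, htip⟩
  exact hz

lemma hc_eq_of_isStopNbr (hf : IsGrowthFn φ (growthFn φ)) (hx : x ∈ φ)
    (hfin : growthFn φ x ≠ ⊤) (h : IsStopNbr φ (growthFn φ) x y) : hc φ x = y := by
  have hex : ∃ z, IsStopNbr φ (growthFn φ) x z := ⟨y, h⟩
  obtain ⟨z, -, huniq⟩ := hf.2.1 x hx hfin
  rw [hc, dif_pos hex, huniq _ hex.choose_spec, huniq _ h]

end GrowthFn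

/-- Four marked points whose growth segments `[x j, x j + a j • v j]` close up: the segment of
`x j` ends at the point of the segment of `x (j + 1)` at distance `b j` from its start. -/
structure IsSegmentLoop (x : Fin 4 → Pt) (a b : Fin 4 → ℝ) : Prop where
  mark_mem : ∀ j, (x j).2 ∈ Mset
  mark_eq_rot : ∀ j, (x j).2 = rot (x (j + 1)).2
  nonneg : ∀ j, 0 ≤ b j
  lt_next : ∀ j, b j < a (j + 1)
  lt_self : ∀ j, b j < a j
  tip_eq : ∀ j, (x j).1 + a j • (x j).2 = (x (j + 1)).1 + b j • (x (j + 1)).2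

namespace IsSegmentLoop

variable {E : Set Pt} {g : Pt → ℝ≥0∞} {x : Fin 4 → Pt} {a b : Fin 4 → ℝ}

lemma ne_add_one (hl : IsSegmentLoop x a b) (j : Fin 4) : x j ≠ x (j + 1) := by
  intro h
  have := hl.tip_eq j
  rw [← h, add_right_inj] at this
  exact (hl.lt_self j).ne' (smul_left_injective ℝ (ne_zero_of_mem_Mset (hl.mark_mem j)) this)

lemma not_isStopNbr (hl : IsSegmentLoop x a b) (hA : Admissible E) (hx : ∀ j, x j ∈ E)
    {j : Fin 4} (hne : (g (x j)).toReal ≠ a j) (k : Fin 4) : ¬ IsStopNbr E g (x j) (x k) := by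
  intro h
  obtain ⟨hsame, hopp⟩ := h.mark_ne hA (hx j)
  obtain ⟨-, ⟨t, -, -, htip⟩, hdist⟩ := h
  have htip' : (x j).1 + (g (x j)).toReal • (x j).2 = (x k).1 + t • (x k).2 := htip
  rcases Fin4.eq_or_eq_or_eq_or_eq j k with rfl | rfl | rfl | rfl
  · exact hsame rfl
  · have hmeet := hl.tip_eq j
    rw [hl.mark_eq_rot j] at htip' hmeet
    exact hne (eq_of_add_smul_rot_eq (ne_zero_of_mem_Mset (hl.mark_mem _)) htip' hmeet).1
  · exact hopp (mark_add_two hl.mark_eq_rot j)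
  · -- the perpendicular line of `x (j + 3)` meets that of `x j` at distance `a (j + 3)` from
    -- `x (j + 3)`, which is too far for a stopping neighbour
    have hrot := mark_add_three hl.mark_eq_rot j
    have hmeet := hl.tip_eq (j + 3)
    rw [Fin4.add_three_add_one, hrot] at hmeet
    rw [hrot] at htip'
    obtain ⟨rfl, hgb⟩ :=
      eq_of_add_smul_rot_eq (ne_zero_of_mem_Mset (hl.mark_mem j)) htip'.symm hmeet
    rw [htip, hrot, add_sub_cancel_left, eNorm_smul_of_mem_Mset (rot_mem_Mset (hl.mark_mem j)),
      hgb] at hdist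
    linarith [hl.lt_self (j + 3), le_abs_self (a (j + 3))]

lemma le_growth (hl : IsSegmentLoop x a b) (hA : Admissible E) (hg : IsGrowthFn E g)
    (hx : ∀ j, x j ∈ E) (hfin : ∀ j, g (x j) ≠ ⊤)
    (hloc : ∀ j y, IsStopNbr E g (x j) y → (g (x j)).toReal < a j → y ∈ Set.range x)
    (j : Fin 4) : a j ≤ (g (x j)).toReal := by
  by_contra! hlt
  obtain ⟨y, hy, -⟩ := hg.2.1 _ (hx j) (hfin j)
  obtain ⟨k, rfl⟩ := hloc j y hy hlt
  exact hl.not_isStopNbr hA hx hlt.ne k hy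

lemma growth_eq (hl : IsSegmentLoop x a b) (hA : Admissible E) (hg : IsGrowthFn E g)
    (hx : ∀ j, x j ∈ E) (hfin : ∀ j, g (x j) ≠ ⊤)
    (hloc : ∀ j y, IsStopNbr E g (x j) y → (g (x j)).toReal < a j → y ∈ Set.range x)
    (j : Fin 4) : (g (x j)).toReal = a j := by
  refine le_antisymm ?_ (hl.le_growth hA hg hx hfin hloc j)
  by_contra! hgt
  have hself : (x j).1 + a j • (x j).2 ∈ seg (x j).1 (x j).2 (g (x j)) :=
    add_smul_mem_seg ((hl.nonneg j).trans (hl.lt_self j).le) (hfin j) hgt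
  have hnext : (x j).1 + a j • (x j).2 ∈ seg (x (j + 1)).1 (x (j + 1)).2 (g (x (j + 1))) := by
    rw [hl.tip_eq]
    exact add_smul_mem_seg (hl.nonneg j) (hfin _)
      ((hl.lt_next j).trans_le (hl.le_growth hA hg hx hfin hloc _))
  exact (hg.1 _ (hx j) _ (hx _) (hl.ne_add_one j)).subset ⟨hself, hnext⟩

lemma isStopNbr (hl : IsSegmentLoop x a b) (hx : ∀ j, x j ∈ E) (hfin : ∀ j, g (x j) ≠ ⊤)
    (heq : ∀ j, (g (x j)).toReal = a j) (j : Fin 4) : IsStopNbr E g (x j) (x (j + 1)) := by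
  have htip : tip g (x j) = (x (j + 1)).1 + b j • (x (j + 1)).2 := by
    rw [tip, heq, hl.tip_eq]
  refine ⟨hx _, htip ▸ add_smul_mem_seg (hl.nonneg j) (hfin _) (heq _ ▸ hl.lt_next j), ?_⟩
  rw [htip, add_sub_cancel_left, eNorm_smul_of_mem_Mset (hl.mark_mem _),
    abs_of_nonneg (hl.nonneg j), heq]
  exact hl.lt_self j

end IsSegmentLoop

lemma Qb_eq_closedBall (δ : ℝ) (ξ : ℝ × ℝ) : Qb δ ξ = Metric.closedBall ξ (δ / 2) := by
  ext p
  simp [Qb, dist_eq_norm]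

lemma exists_eq_add_smul_of_mem_segment {ξ v p : ℝ × ℝ} {a : ℝ} (ha : 0 ≤ a)
    (hp : p ∈ segment ℝ ξ (ξ + a • v)) : ∃ c, 0 ≤ c ∧ c ≤ a ∧ p = ξ + c • v := by
  rw [segment_eq_image'] at hp
  obtain ⟨θ, ⟨hθ0, hθ1⟩, rfl⟩ := hp
  refine ⟨θ * a, mul_nonneg hθ0 ha, mul_le_of_le_one_left ha hθ1, ?_⟩
  simp only [add_sub_cancel_left, smul_smul]

namespace IsCycle

variable {ξ : ℝ × ℝ} {δ : ℝ} {x : Fin 4 → Pt}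

lemma growthFn_le (hcyc : IsCycle ξ δ x) {j : Fin 4} (hM : (x j).2 ∈ Mset) :
    (growthFn (Set.range x) (x j)).toReal ≤ δ := by
  have hlen : ‖hg (Set.range x) (x j) - (x j).1‖ = (growthFn (Set.range x) (x j)).toReal := by
    rw [hg, tip, add_sub_cancel_left, norm_smul_of_mem_Mset hM, abs_of_nonneg ENNReal.toReal_nonneg]
  calc (growthFn (Set.range x) (x j)).toReal
      = ‖hg (Set.range x) (x j) - (x j).1‖ := hlen.symm
    _ ≤ ‖hg (Set.range x) (x j) - ξ‖ + ‖(x j).1 - ξ‖ :=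
        (norm_sub_le_norm_sub_add_norm_sub _ ξ _).trans_eq (by rw [norm_sub_rev ξ])
    _ ≤ δ / 2 + δ / 2 := add_le_add (hcyc.2.2.2.1 j) (hcyc.2.1 j)
    _ = δ := add_halves δ

lemma mem_range_of_isStopNbr (hcyc : IsCycle ξ δ x) (hM : ∀ j, (x j).2 ∈ Mset) {φ : Set Pt}
    (hdisj : φ ∩ QbM (3 * δ) ξ = ∅) {g : Pt → ℝ≥0∞} {j : Fin 4} {y : Pt}
    (hy : IsStopNbr (Set.range x ∪ φ) g (x j) y)
    (hlt : (g (x j)).toReal < (growthFn (Set.range x) (x j)).toReal) : y ∈ Set.range x := by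
  set s := (g (x j)).toReal
  set a := (growthFn (Set.range x) (x j)).toReal
  have ha : 0 < a := ENNReal.toReal_nonneg.trans_lt hlt
  have htip : tip g (x j) ∈ Qb δ ξ := by
    have hconv := (convex_closedBall ξ (δ / 2)).add_smul_mem (y := a • (x j).2)
      (t := s / a) (hcyc.2.1 j)
      (by rw [← Qb_eq_closedBall]; exact hcyc.2.2.2.1 j)
      ⟨div_nonneg ENNReal.toReal_nonneg ha.le, (div_le_one ha).2 hlt.le⟩
    rwa [smul_smul, div_mul_cancel₀ _ ha.ne', ← Qb_eq_closedBall] at hconv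
  refine hy.1.resolve_right fun hyφ => (hdisj.subset ⟨hyφ, ?_⟩ : y ∈ (∅ : Set Pt))
  calc ‖y.1 - ξ‖ ≤ ‖y.1 - tip g (x j)‖ + ‖tip g (x j) - ξ‖ :=
        norm_sub_le_norm_sub_add_norm_sub _ _ _
    _ ≤ δ + δ / 2 :=
        add_le_add (hy.norm_sub_lt.le.trans (hlt.le.trans (hcyc.growthFn_le (hM j)))) htip
    _ = 3 * δ / 2 := by ring

lemma exists_isSegmentLoop (hcyc : IsCycle ξ δ x) (hD : Nprime (Set.range x)) :
    ∃ b, IsSegmentLoop x (fun j => (growthFn (Set.range x) (x j)).toReal) b := by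
  set f := growthFn (Set.range x)
  set a : Fin 4 → ℝ := fun j => (f (x j)).toReal
  have hf := growthFn_isGrowthFn hD.2.2.1
  have hxD : ∀ j, x j ∈ Set.range x := Set.mem_range_self
  have hM : ∀ j, (x j).2 ∈ Mset := fun j => hD.2.1.2.1 _ (hxD j)
  have hfin : ∀ j, f (x j) ≠ ⊤ := fun j => hD.2.2.2 _ (hxD j)
  have hpos : ∀ j, 0 < a j := fun j => (hf.2.1 _ (hxD j) (hfin j)).exists.choose_spec.toReal_pos
  have hmeet (j : Fin 4) : ∃ c, 0 ≤ c ∧ c ≤ a (j + 1) ∧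
      tip f (x j) = (x (j + 1)).1 + c • (x (j + 1)).2 :=
    exists_eq_add_smul_of_mem_segment (hpos _).le (hcyc.2.2.2.2.1 j)
  choose c hc0 hca htip using hmeet
  -- `c j = a (j + 1)` would put `x (j + 2)` on the line through `x j` in direction `v j`
  have hlt (j : Fin 4) : c j < a (j + 1) := by
    refine (hca j).lt_of_ne fun heq => hD.2.1.sub_ne_smul (hxD j) (hxD (j + 2)) (hM j)
      (c := a j + c (j + 1)) (by linarith [hpos j, hc0 (j + 1)]) ?_
    have h1 := htip j
    have h2 := htip (j + 1)
    rw [heq] at h1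
    rw [Fin4.add_one_add_one, mark_add_two hcyc.2.2.1] at h2
    simp only [tip] at h1 h2
    linear_combination (norm := module) -(h1.trans h2)
  refine ⟨c, hM, hcyc.2.2.1, hc0, hlt, fun j => ?_, htip⟩
  have hstop := hf.isStopNbr_of_tip_mem (hxD j) (hfin j) (hxD (j + 1))
    (htip j ▸ add_smul_mem_seg (hc0 j) (hfin _) (hlt j))
  have hdist := hstop.2.2
  rwa [htip, add_sub_cancel_left, eNorm_smul_of_mem_Mset (hM _), abs_of_nonneg (hc0 j)]
    at hdist

end IsCycle

theorem cycle_stabilization_general (δ : ℝ) (ξ : ℝ × ℝ) (φ : Set Pt)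
    (hdisj : φ ∩ QbM (3 * δ) ξ = ∅)
    (x : Fin 4 → Pt) (hcyc : IsCycle ξ δ x)
    (hD : Nprime (Set.range x)) (hDφ : Nprime (Set.range x ∪ φ)) :
    ∀ j : Fin 4, hc (Set.range x ∪ φ) (x j) = hc (Set.range x) (x j) := by
  obtain ⟨b, hl⟩ := hcyc.exists_isSegmentLoop hD
  have hf := growthFn_isGrowthFn hD.2.2.1
  have hg := growthFn_isGrowthFn hDφ.2.2.1
  have hxD : ∀ j, x j ∈ Set.range x := Set.mem_range_self
  have hxE : ∀ j, x j ∈ Set.range x ∪ φ := fun j => Or.inl (hxD j)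
  have hfinD : ∀ j, growthFn _ (x j) ≠ ⊤ := fun j => hD.2.2.2 _ (hxD j)
  have hfinE : ∀ j, growthFn _ (x j) ≠ ⊤ := fun j => hDφ.2.2.2 _ (hxE j)
  have heq := hl.growth_eq hDφ.2.1 hg hxE hfinE fun _ _ hy hlt =>
    hcyc.mem_range_of_isStopNbr hl.mark_mem hdisj hy hlt
  intro j
  rw [hc_eq_of_isStopNbr hg (hxE j) (hfinE j) (hl.isStopNbr hxE hfinE heq j),
    hc_eq_of_isStopNbr hf (hxD j) (hfinD j) (hl.isStopNbr hxD hfinD (fun _ => rfl) j)]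

/-- Lemma: strong external stabilization of `δ`-cycles.
Let `δ > 0`, `ξ ∈ ℝ²` and `φ ∈ N′` with `φ ∩ Q^M_{3δ}(ξ) = ∅`.  Let `D` be a
`(ξ, δ)`-cycle with `D ∈ N′` and `D ∪ φ ∈ N′`.  Then
`h_c(D ∪ φ, x_i) = h_c(D, x_i)` for every point `x_i` of `D`. -/
theorem cycle_stabilization (δ : ℝ) (hδ : 0 < δ) (ξ : ℝ × ℝ) (φ : Set Pt)
    (hφ : Nprime φ) (hdisj : φ ∩ QbM (3 * δ) ξ = ∅)
    (x : Fin 4 → Pt) (hcyc : IsCycle ξ δ x)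
    (hD : Nprime (Set.range x)) (hDφ : Nprime (Set.range x ∪ φ)) :
    ∀ j : Fin 4, hc (Set.range x ∪ φ) (x j) = hc (Set.range x) (x j) :=
  cycle_stabilization_general δ ξ φ hdisj x hcyc hD hDφ

end Lilypond
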